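/- arXiv:0809.3066 — 10 statements merged into one kernel-verified Lean document; each statement's English description precedes it below -/
import Mathlib

section
/- Let X be a complete separable metric space and let B_X denote the σ-algebra of Borel subsets of X. Then (X, B_X) is a type B space; that is, there exists an exactly measurable map f : (X, B_X) → (M, B) such that f(X) is a Borel subset of M. -/
open MeasureTheory

/-- A map `f : (X,E) → (Y,F)` between measurable spaces is *exactly measurable* if
`f⁻¹(F) = E`, i.e. `E = {f⁻¹(F') : F' ∈ F}`. -/
def ExactlyMeasurable {X Y : Type*} [mX : MeasurableSpace X] [mY : MeasurableSpace Y]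
    (f : X → Y) : Prop :=
  MeasurableSpace.comap f mY = mX

theorem MeasurableEmbedding.exactlyMeasurable {X Y : Type*} [mX : MeasurableSpace X]
    [mY : MeasurableSpace Y] {f : X → Y} (hf : MeasurableEmbedding f) :
    ExactlyMeasurable f := by
  refine le_antisymm hf.measurable.comap_le ?_
  intro s hs
  exact ⟨f '' s, hf.measurableSet_image.2 hs, by
    rw [Set.preimage_image_eq _ hf.injective]⟩

/-- Let `X` be a complete separable metric space with its Borel σ-algebra.  Then `(X, B_X)`
is a type B space: there is an exactly measurable map to the Cantor space `M = {0,1}^ℕ`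
(with its Borel σ-algebra, which coincides with the product σ-algebra) whose range is a
Borel subset of `M`. -/
theorem stmt0 {X : Type*} [MetricSpace X] [CompleteSpace X]
    [TopologicalSpace.SeparableSpace X] [MeasurableSpace X] [BorelSpace X] :
    ∃ f : X → (ℕ → Bool), ExactlyMeasurable f ∧ MeasurableSet (Set.range f) := by
  have : PolishSpace X := inferInstance
  obtain ⟨g, hg⟩ := MeasureTheory.exists_measurableEmbedding_real X
  have hR : ¬ Countable ℝ := fun _ => Cardinal.not_countable_real Set.countable_univ
  let e := PolishSpace.measurableEquivNatBoolOfNotCountable (α := ℝ) hR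
  exact ⟨e ∘ g, (e.measurableEmbedding.comp hg).exactlyMeasurable,
    (e.measurableEmbedding.comp hg).measurableSet_range⟩
end

section
/- Let (X,E) be a separable type B space. Then (X,E) is a standard Borel space: there exists a topology τ on X such that (X,τ) is a Polish space (separable and completely metrizable) whose Borel σ-algebra is exactly E. -/
open MeasureTheory

/-- A countably generated measurable space `(X,E)` is a *type B space* if there is an
exactly measurable map `f : (X,E) → (M,B)` into the Cantor space whose range is Borel. -/
def IsTypeB (X : Type*) [MeasurableSpace X] : Prop :=
  MeasurableSpace.CountablyGenerated X ∧
    ∃ f : X → (ℕ → Bool), ExactlyMeasurable f ∧ MeasurableSet (Set.range f)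

/-- Every separable type B space is a standard Borel space: there is a topology `τ` on `X`
making `X` a Polish space whose Borel σ-algebra is exactly the given σ-algebra. -/
theorem stmt1 {X : Type*} [mX : MeasurableSpace X] [MeasurableSingletonClass X]
    (hX : IsTypeB X) :
    ∃ τ : TopologicalSpace X, @PolishSpace X τ ∧ @borel X τ = mX := by
  obtain ⟨-, f, hf, hrange⟩ := hX
  -- f is injective
  have hinj : Function.Injective f := by
    intro x y hxy
    have hx : MeasurableSet ({x} : Set X) := measurableSet_singleton x
    rw [← hf] at hx
    obtain ⟨B, -, hB⟩ := hx
    have hyB : y ∈ f ⁻¹' B := by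
      have : x ∈ f ⁻¹' B := by rw [hB]; exact rfl
      simpa [Set.mem_preimage, ← hxy] using this
    rw [hB] at hyB
    exact hyB.symm
  -- the measurable equivalence with the range
  have e : X ≃ᵐ Set.range f :=
    { toEquiv := Equiv.ofInjective f hinj
      measurable_toFun := by
        intro s hs
        obtain ⟨B, hB, rfl⟩ := hs
        rw [← hf]
        exact ⟨B, hB, rfl⟩
      measurable_invFun := by
        intro s hs
        rw [← hf] at hs
        obtain ⟨B, hB, rfl⟩ := hs
        have : (Equiv.ofInjective f hinj).symm ⁻¹' (f ⁻¹' B)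
            = Subtype.val ⁻¹' B := by
          ext y
          simp only [Set.mem_preimage]
          rw [Equiv.apply_ofInjective_symm hinj]
        rw [this]
        exact measurable_subtype_coe hB }
  obtain ⟨t', hb, hp⟩ := hrange.standardBorel.polish
  letI := t'
  letI τ : TopologicalSpace X := TopologicalSpace.induced e t'
  have he : @Topology.IsInducing X (Set.range f) τ t' e := @Topology.IsInducing.mk _ _ τ t' _ rfl
  have homeo : @Homeomorph X (Set.range f) τ t' :=
    @Equiv.toHomeomorphOfIsInducing _ _ τ t' e.toEquiv he
  refine ⟨τ, ?_, ?_⟩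
  · exact (@Homeomorph.isClosedEmbedding _ _ τ t' homeo).polishSpace
  · have h1 : @borel X τ = MeasurableSpace.comap e (@borel _ t') := borel_comap
    rw [h1, ← hb.measurable_eq]
    exact e.measurableEmbedding.comap_eq
end

section
/- Let (X,E) be a countably generated measurable space and suppose there exists an exactly measurable map f₀ : (X,E) → (M,B) with f₀(X) a Borel (respectively, analytic) subset of M. Then for every exactly measurable map f : (X,E) → (M,B), the image f(X) is a Borel (respectively, analytic) subset of M. -/
open MeasureTheory

open Set in
/-- A measurable image of an analytic set in Cantor space is analytic. -/
lemma analyticSet_image_of_measurable {s : Set (ℕ → Bool)} (hs : AnalyticSet s)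
    {φ : (ℕ → Bool) → (ℕ → Bool)} (hφ : Measurable φ) : AnalyticSet (φ '' s) := by
  rw [MeasureTheory.AnalyticSet] at hs
  rcases hs with h | ⟨τ, τcont, rfl⟩
  · simp [h, MeasureTheory.analyticSet_empty]
  · rw [← range_comp]
    have hg : Measurable (φ ∘ τ) := hφ.comp τcont.measurable
    obtain ⟨t', t't, g_cont, t'_polish⟩ := hg.exists_continuous
    exact @analyticSet_range_of_polishSpace _ _ (ℕ → ℕ) t' t'_polish _ g_cont

open Set in
/-- Doob–Dynkin style factorization. -/
lemma exists_factor {X : Type*} [mX : MeasurableSpace X]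
    (f₀ : X → (ℕ → Bool)) (hf₀ : ExactlyMeasurable f₀)
    (f : X → (ℕ → Bool)) (hf : ExactlyMeasurable f) :
    ∃ φ : (ℕ → Bool) → (ℕ → Bool), Measurable φ ∧ φ ∘ f₀ = f := by
  classical
  have hfm : Measurable f := by
    rw [← hf]; exact fun s hs => MeasurableSpace.measurableSet_comap.2 ⟨s, hs, rfl⟩
  have hA : ∀ n : ℕ, ∃ S : Set (ℕ → Bool), MeasurableSet S ∧
      f₀ ⁻¹' S = f ⁻¹' {y | y n = true} := by
    intro n
    have : MeasurableSet[MeasurableSpace.comap f₀ inferInstance] (f ⁻¹' {y | y n = true}) := by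
      rw [hf₀]
      have hset : MeasurableSet {y : ℕ → Bool | y n = true} := by
        have : {y : ℕ → Bool | y n = true} = (fun y : ℕ → Bool => y n) ⁻¹' {true} := rfl
        rw [this]
        exact (measurable_pi_apply n) (measurableSet_singleton true)
      exact hfm hset
    exact this
  choose S hSmeas hSpre using hA
  refine ⟨fun y n => if y ∈ S n then true else false, ?_, ?_⟩
  · exact measurable_pi_lambda _ fun n =>
      Measurable.ite (hSmeas n) measurable_const measurable_const
  · funext x
    funext n
    have hx : f₀ x ∈ S n ↔ f x n = true := by
      constructor
      · intro h
        have : x ∈ f ⁻¹' {y | y n = true} := (hSpre n) ▸ h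
        exact this
      · intro h
        have : x ∈ f₀ ⁻¹' (S n) := (hSpre n).symm ▸ (h : x ∈ f ⁻¹' {y | y n = true})
        exact this
    simp only [Function.comp_apply]
    by_cases h : f₀ x ∈ S n
    · simp [h, (hx.1 h).symm]
    · simp only [h, if_false]
      cases hfx : f x n
      · rfl
      · exact absurd (hx.2 hfx) h

/-- Let `(X,E)` be countably generated, and suppose `f₀ : (X,E) → (M,B)` is exactly
measurable with Borel (resp. analytic) range.  Then every exactly measurable
`f : (X,E) → (M,B)` has Borel (resp. analytic) range. -/
theorem stmt2 {X : Type*} [mX : MeasurableSpace X]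
    [MeasurableSpace.CountablyGenerated X]
    (f₀ : X → (ℕ → Bool)) (hf₀ : ExactlyMeasurable f₀)
    (f : X → (ℕ → Bool)) (hf : ExactlyMeasurable f) :
    (MeasurableSet (Set.range f₀) → MeasurableSet (Set.range f)) ∧
      (MeasureTheory.AnalyticSet (Set.range f₀) → MeasureTheory.AnalyticSet (Set.range f)) := by
  obtain ⟨φ, hφm, hφc⟩ := exists_factor f₀ hf₀ f hf
  obtain ⟨ψ, hψm, hψc⟩ := exists_factor f hf f₀ hf₀
  have hrange : Set.range f = φ '' Set.range f₀ := by
    rw [← Set.range_comp, hφc]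
  have hinj : Set.InjOn φ (Set.range f₀) := by
    rintro _ ⟨a, rfl⟩ _ ⟨b, rfl⟩ h
    have ha : f a = f b := by
      have := congrFun hφc a
      have := congrFun hφc b
      simp only [Function.comp_apply] at *
      rw [← ‹φ (f₀ a) = f a›, ← ‹φ (f₀ b) = f b›, h]
    calc f₀ a = ψ (f a) := (congrFun hψc a).symm
      _ = ψ (f b) := by rw [ha]
      _ = f₀ b := congrFun hψc b
  constructor
  · intro h
    rw [hrange]
    exact h.image_of_measurable_injOn hφm hinj
  · intro h
    rw [hrange]
    exact analyticSet_image_of_measurable h hφm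
end

section
/- Let (X,E) be a type A space and (Y,F) a countably generated measurable space. If there exists a surjective measurable map f : (X,E) → (Y,F), then (Y,F) is a type A space. -/
open MeasureTheory

/-- A countably generated measurable space `(X,E)` is a *type A space* if there is an
exactly measurable map `f : (X,E) → (M,B)` into the Cantor space whose range is an
analytic subset of `M`. -/
def IsTypeA (X : Type*) [MeasurableSpace X] : Prop :=
  MeasurableSpace.CountablyGenerated X ∧
    ∃ f : X → (ℕ → Bool), ExactlyMeasurable f ∧ MeasureTheory.AnalyticSet (Set.range f)

open MeasurableSpace Set in
lemma measurableSet_eval_true (n : ℕ) : MeasurableSet {y : ℕ → Bool | y n = true} := by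
  have h : Measurable fun y : ℕ → Bool => y n := measurable_pi_apply n
  have h2 := h (measurableSet_singleton true)
  simpa [Set.preimage, Set.mem_singleton_iff] using h2

open MeasurableSpace Set in
/-- The canonical map to the Cantor space of a countably generated space is exactly
measurable. -/
lemma exactlyMeasurable_mapNatBool (Y : Type*) [mY : MeasurableSpace Y]
    [MeasurableSpace.CountablyGenerated Y] : ExactlyMeasurable (mapNatBool Y) := by
  refine le_antisymm ((measurable_mapNatBool Y).comap_le) ?_
  conv_lhs => rw [← generateFrom_natGeneratingSequence Y]
  refine generateFrom_le ?_
  rintro _ ⟨n, rfl⟩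
  refine ⟨{y | y n = true}, measurableSet_eval_true n, ?_⟩
  ext x
  simp [mapNatBool]

open MeasurableSpace Set in
/-- If `X` is a type A space, the range of any measurable map from `X` to the Cantor
space is analytic. -/
lemma analyticSet_range_of_isTypeA {X : Type*} [mX : MeasurableSpace X]
    (hX : IsTypeA X) {k : X → ℕ → Bool} (hk : Measurable k) :
    AnalyticSet (range k) := by
  classical
  obtain ⟨-, h, hhe, hha⟩ := hX
  -- For each coordinate, find a Borel set pulling back to the preimage.
  have hmeas : ∀ n : ℕ, MeasurableSet[MeasurableSpace.comap h inferInstance]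
      (k ⁻¹' {y | y n = true}) := by
    intro n
    rw [hhe]
    exact hk (measurableSet_eval_true n)
  choose B hB hBeq using fun n => hmeas n
  set φ : (ℕ → Bool) → ℕ → Bool := fun z n => decide (z ∈ B n) with hφ
  have hφmeas : Measurable φ := by
    rw [measurable_pi_iff]
    intro n
    refine measurable_to_bool ?_
    have : (fun z => decide (z ∈ B n)) ⁻¹' {true} = B n := by
      ext z; simp
    exact this ▸ hB n
  have hcomp : φ ∘ h = k := by
    funext x n
    have hx : h x ∈ B n ↔ k x n = true := by
      constructor
      · intro hxB
        have : x ∈ h ⁻¹' B n := hxB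
        rw [hBeq n] at this
        exact this
      · intro hxk
        have : x ∈ h ⁻¹' B n := by rw [hBeq n]; exact hxk
        exact this
    simp only [hφ, Function.comp_apply]
    rcases Bool.dichotomy (k x n) with hb | hb <;> simp [hb, hx]
  have hrange : range k = φ '' range h := by
    rw [← hcomp, Set.range_comp]
  rw [hrange]
  rcases analyticSet_iff_exists_polishSpace_range.1 hha with ⟨β, tβ, pβ, τ, τcont, τrange⟩
  letI : MeasurableSpace β := borel β
  haveI : BorelSpace β := ⟨rfl⟩
  have : φ '' range h = (φ ∘ τ) '' Set.univ := by
    rw [Set.image_univ, Set.range_comp, τrange]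
  rw [this]
  exact MeasurableSet.univ.analyticSet_image (hφmeas.comp τcont.measurable)

/-- Let `(X,E)` be a type A space and `(Y,F)` countably generated.  If there exists a
surjective measurable map `f : (X,E) → (Y,F)`, then `(Y,F)` is a type A space. -/
theorem stmt3 {X Y : Type*} [MeasurableSpace X] [MeasurableSpace Y]
    (hX : IsTypeA X) [MeasurableSpace.CountablyGenerated Y]
    (f : X → Y) (hf : Measurable f) (hsurj : Function.Surjective f) :
    IsTypeA Y := by
  refine ⟨inferInstance, MeasurableSpace.mapNatBool Y, exactlyMeasurable_mapNatBool Y, ?_⟩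
  have hrange : Set.range (MeasurableSpace.mapNatBool Y)
      = Set.range (MeasurableSpace.mapNatBool Y ∘ f) := by
    rw [Set.range_comp, hsurj.range_eq, Set.image_univ]
  rw [hrange]
  exact analyticSet_range_of_isTypeA hX
    ((MeasurableSpace.measurable_mapNatBool Y).comp hf)
end

section
/- Let f : (X,E) → (Y,F) be an injective measurable map, where (X,E) and (Y,F) are both separable type B spaces. Then f(E') ∈ F for every E' ∈ E; in particular f(X) ∈ F. -/
open MeasureTheory

lemma typeB_standardBorel {X : Type*} [mX : MeasurableSpace X] [MeasurableSingletonClass X]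
    (hX : ∃ g : X → (ℕ → Bool), MeasurableSpace.comap g inferInstance = mX ∧
      MeasurableSet (Set.range g)) : StandardBorelSpace X := by
  obtain ⟨g, hg, hrange⟩ := hX
  have hginj : Function.Injective g := by
    intro x x' h
    have hs : MeasurableSet {x} := measurableSet_singleton x
    rw [← hg] at hs
    obtain ⟨B, -, hB⟩ := hs
    have hx : x ∈ g ⁻¹' B := by rw [hB]; rfl
    have hx' : x' ∈ g ⁻¹' B := by simpa [Set.mem_preimage, h] using hx
    rw [hB] at hx'
    exact hx'.symm
  have hgmeas : Measurable g := by rw [measurable_iff_comap_le, hg]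
  haveI : StandardBorelSpace (Set.range g) := hrange.standardBorel
  let e : X ≃ (Set.range g) := Equiv.ofInjective g hginj
  have hemeas : Measurable e := hgmeas.subtype_mk
  have hesymm : Measurable e.symm := by
    intro s hs
    rw [← hg] at hs
    obtain ⟨B, hB, rfl⟩ := hs
    have h2 : e.symm ⁻¹' (g ⁻¹' B) = Subtype.val ⁻¹' B := by
      ext y
      simp only [Set.mem_preimage]
      have : g (e.symm y) = y := congrArg Subtype.val (e.apply_symm_apply y)
      rw [this]
    rw [h2]
    exact measurable_subtype_coe hB
  have hEq : mX = MeasurableSpace.comap e Subtype.instMeasurableSpace :=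
    le_antisymm (fun s hs => ⟨e.symm ⁻¹' s, hesymm hs, by simp⟩)
      (measurable_iff_comap_le.mp hemeas)
  obtain ⟨τ, hb, hp⟩ := (hrange.standardBorel).polish
  letI τX : TopologicalSpace X := τ.induced e
  haveI : PolishSpace X := @Equiv.polishSpace_induced _ _ τ hp e
  haveI : BorelSpace X := by
    constructor
    rw [borel_comap, ← hb.measurable_eq]
    exact hEq
  infer_instance

/-- Let `f : (X,E) → (Y,F)` be an injective measurable map between separable type B
spaces.  Then `f(E') ∈ F` for every `E' ∈ E`; in particular `f(X) ∈ F`. -/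
theorem stmt5 {X Y : Type*} [MeasurableSpace X] [MeasurableSpace Y]
    [MeasurableSingletonClass X] [MeasurableSingletonClass Y]
    (hX : IsTypeB X) (hY : IsTypeB Y)
    (f : X → Y) (hf : Measurable f) (hinj : Function.Injective f) :
    (∀ E' : Set X, MeasurableSet E' → MeasurableSet (f '' E')) ∧
      MeasurableSet (Set.range f) := by
  haveI : StandardBorelSpace X := typeB_standardBorel hX.2
  haveI : StandardBorelSpace Y := typeB_standardBorel hY.2
  have hemb := hf.measurableEmbedding hinj
  exact ⟨fun E' hE' => hemb.measurableSet_image.mpr hE',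
    Set.image_univ ▸ hemb.measurableSet_image.mpr MeasurableSet.univ⟩
end

section
/- Let (X,E) be a separable type A space and (Y,F) a separable measurable space which is countably separated. If there exists a surjective measurable map f : (X,E) → (Y,F), then F is countably generated. -/
/-!
Separating points of `Y` by countably many measurable sets gives a measurable injection
`h : Y → {0,1}^ℕ`. For measurable `B ⊆ Y`, surjectivity gives
`h '' B = (h ∘ f) '' (f ⁻¹' B)`, and since `X` is exactly coded by `g` with analytic range,
`h ∘ f` factors as `k ∘ g` with `k` Borel, so `h '' B` is the Borel image of the analytic set
`range g ∩ A` (where `f ⁻¹' B = g ⁻¹' A`), hence analytic. The same holds for `Bᶜ`, so Lusin's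
separation theorem yields a Borel set `D` with `B = h ⁻¹' D`: the σ-algebra of `Y` is pulled
back from the Cantor space.
-/

open MeasureTheory

open Set

theorem MeasurableSpace.countablySeparated_of_exists_separating {Y : Type*} [MeasurableSpace Y]
    (hsep : ∃ T : Set (Set Y), T.Countable ∧ (∀ t ∈ T, MeasurableSet t) ∧
      ∀ y₁ y₂ : Y, y₁ ≠ y₂ →
        ∃ t ∈ T, (y₁ ∈ t ∧ y₂ ∉ t) ∨ (y₂ ∈ t ∧ y₁ ∉ t)) :
    CountablySeparated Y := by
  obtain ⟨T, hTc, hTm, hT⟩ := hsep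
  refine ⟨⟨T, hTc, hTm, fun y₁ _ y₂ _ hmem => ?_⟩⟩
  by_contra hne
  obtain ⟨t, ht, h | h⟩ := hT y₁ y₂ hne
  · exact h.2 ((hmem t ht).1 h.1)
  · exact h.2 ((hmem t ht).2 h.1)

theorem MeasureTheory.AnalyticSet.inter_measurableSet {α : Type*} [TopologicalSpace α]
    [PolishSpace α] [MeasurableSpace α] [BorelSpace α] {s t : Set α} (hs : AnalyticSet s)
    (ht : MeasurableSet t) : AnalyticSet (s ∩ t) := by
  rw [inter_eq_iInter]
  exact AnalyticSet.iInter fun b => by cases b <;> simp [ht.analyticSet, hs]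

theorem MeasureTheory.AnalyticSet.image_of_measurable {α β : Type*}
    [TopologicalSpace α] [MeasurableSpace α] [BorelSpace α]
    [TopologicalSpace β] [MeasurableSpace β] [OpensMeasurableSpace β]
    [SecondCountableTopology β]
    {s : Set α} (hs : AnalyticSet s) {k : α → β} (hk : Measurable k) :
    AnalyticSet (k '' s) := by
  obtain ⟨Z, _, _, τ, hτ, rfl⟩ := analyticSet_iff_exists_polishSpace_range.1 hs
  borelize Z
  rw [← image_univ, ← image_comp]
  exact MeasurableSet.univ.analyticSet_image (hk.comp hτ.measurable)

theorem ExactlyMeasurable.analyticSet_image {X Z W : Type*} [MeasurableSpace X]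
    [TopologicalSpace Z] [PolishSpace Z] [MeasurableSpace Z] [BorelSpace Z]
    [TopologicalSpace W] [PolishSpace W] [MeasurableSpace W] [BorelSpace W] [Nonempty W]
    {g : X → Z} (hg : ExactlyMeasurable g) (hrange : AnalyticSet (range g))
    {φ : X → W} (hφ : Measurable φ) {B : Set X} (hB : MeasurableSet B) :
    AnalyticSet (φ '' B) := by
  unfold ExactlyMeasurable at hg
  subst hg
  obtain ⟨k, hk, rfl⟩ := hφ.exists_eq_measurable_comp
  obtain ⟨A, hA, rfl⟩ := hB
  rw [image_comp, image_preimage_eq_range_inter]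
  exact (hrange.inter_measurableSet hA).image_of_measurable hk

theorem MeasurableSpace.countablyGenerated_of_injective_of_analyticSet_image
    {Y W : Type*} [MeasurableSpace Y] [TopologicalSpace W] [T2Space W] [SecondCountableTopology W]
    [MeasurableSpace W] [BorelSpace W] {h : Y → W} (hm : Measurable h)
    (hinj : Function.Injective h) (himage : ∀ B, MeasurableSet B → AnalyticSet (h '' B)) :
    CountablyGenerated Y := by
  suffices heq : MeasurableSpace.comap h inferInstance = ‹MeasurableSpace Y› from
    heq ▸ CountablyGenerated.comap h
  refine le_antisymm hm.comap_le fun B hB => ?_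
  obtain ⟨D, hBD, hDdisj, hD⟩ := (himage B hB).measurablySeparable (himage Bᶜ hB.compl)
    ((disjoint_image_iff hinj).2 disjoint_compl_right)
  refine ⟨D, hD, Subset.antisymm (fun y hy => ?_) (image_subset_iff.1 hBD)⟩
  by_contra hyB
  exact disjoint_left.1 hDdisj (mem_image_of_mem h hyB) hy

theorem stmt6_general {X Y : Type*} [MeasurableSpace X] [MeasurableSpace Y]
    (hX : IsTypeA X)
    (hsep : ∃ T : Set (Set Y), T.Countable ∧ (∀ t ∈ T, MeasurableSet t) ∧
      ∀ y₁ y₂ : Y, y₁ ≠ y₂ →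
        ∃ t ∈ T, (y₁ ∈ t ∧ y₂ ∉ t) ∨ (y₂ ∈ t ∧ y₁ ∉ t))
    (f : X → Y) (hf : Measurable f) (hsurj : Function.Surjective f) :
    MeasurableSpace.CountablyGenerated Y := by
  obtain ⟨-, g, hg, hrange⟩ := hX
  have := MeasurableSpace.countablySeparated_of_exists_separating hsep
  obtain ⟨h, hm, hinj⟩ := MeasurableSpace.measurable_injection_nat_bool_of_countablySeparated Y
  -- instance search does not find this one on its own
  have : PolishSpace (ℕ → Bool) := {}
  refine MeasurableSpace.countablyGenerated_of_injective_of_analyticSet_image hm hinj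
    fun B hB => ?_
  rw [← image_preimage_eq B hsurj, ← image_comp]
  exact hg.analyticSet_image hrange (hm.comp hf) (hf hB)

/-- Let `(X,E)` be a separable type A space and `(Y,F)` a separable measurable space
which is countably separated (some countable family of measurable sets separates the
points of `Y`).  If there exists a surjective measurable map `f : (X,E) → (Y,F)`,
then `F` is countably generated. -/
theorem stmt6 {X Y : Type*} [MeasurableSpace X] [MeasurableSpace Y]
    [MeasurableSingletonClass X] [MeasurableSingletonClass Y]
    (hX : IsTypeA X)
    (hsep : ∃ T : Set (Set Y), T.Countable ∧ (∀ t ∈ T, MeasurableSet t) ∧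
      ∀ y₁ y₂ : Y, y₁ ≠ y₂ →
        ∃ t ∈ T, (y₁ ∈ t ∧ y₂ ∉ t) ∨ (y₂ ∈ t ∧ y₁ ∉ t))
    (f : X → Y) (hf : Measurable f) (hsurj : Function.Surjective f) :
    MeasurableSpace.CountablyGenerated Y :=
  stmt6_general hX hsep f hf hsurj
end

section
/- Every analytic subset of M is universally measurable: for every analytic set A ⊆ M and every finite measure μ on (M,B) there exist Borel sets B⁻, B⁺ ∈ B with B⁻ ⊆ A ⊆ B⁺ and μ(B⁺ \ B⁻) = 0. -/
/-!
Inner approximation of `A = range τ`, `τ : ℕ^ℕ → X` continuous, by compact sets (a capacitability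
argument). Bounding the coordinates of `ℕ^ℕ` one at a time, `x n ≤ σ n`, and choosing each bound
`σ n` greedily so that the measure of the image drops by at most `δ n`, with `∑ δ n < ε`, yields
boxes `{x | ∀ i < n, x i ≤ σ i}` whose images all have measure at least `μ A - ε`. The intersection
of the closures of these images lies in the image of the compact box `{x | ∀ i, x i ≤ σ i}`, so
this compact subset of `A` has measure at least `μ A - ε`. A countable union of such compact sets
is a Borel subset of `A` of full outer measure.
-/

open MeasureTheory Filter Set Topology
open scoped ENNReal NNReal

lemma Monotone.exists_measure_iUnion_le_add {α ι : Type*} [MeasurableSpace α] {μ : Measure α}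
    [Preorder ι] [IsDirectedOrder ι] [(atTop : Filter ι).IsCountablyGenerated] [Nonempty ι]
    {s : ι → Set α}
    (hs : Monotone s) (hfin : μ (⋃ i, s i) ≠ ∞) {δ : ℝ≥0∞} (hδ : δ ≠ 0) :
    ∃ i, μ (⋃ i, s i) ≤ μ (s i) + δ := by
  have hlt : μ (⋃ i, s i) < ⨆ i, (μ (s i) + δ) := by
    rw [← ENNReal.iSup_add, ← hs.measure_iUnion]
    exact ENNReal.lt_add_right hfin hδ
  obtain ⟨i, hi⟩ := lt_iSup_iff.1 hlt
  exact ⟨i, hi.le⟩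

namespace Baire

def boxUpTo (σ : ℕ → ℕ) (n : ℕ) : Set (ℕ → ℕ) := {x | ∀ i < n, x i ≤ σ i}

@[simp]
lemma boxUpTo_zero (σ : ℕ → ℕ) : boxUpTo σ 0 = univ := by
  ext x; simp [boxUpTo]

lemma boxUpTo_succ (σ : ℕ → ℕ) (n : ℕ) :
    boxUpTo σ (n + 1) = boxUpTo σ n ∩ {x | x n ≤ σ n} := by
  ext x; simp only [boxUpTo, Nat.forall_lt_succ_right, mem_ofPred_eq, mem_inter_iff]

lemma boxUpTo_antitone (σ : ℕ → ℕ) : Antitone (boxUpTo σ) :=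
  fun _ _ hnm _ hx i hi => hx i (hi.trans_le hnm)

lemma exists_le_nhds_of_forall_boxUpTo_mem {σ : ℕ → ℕ} (U : Ultrafilter (ℕ → ℕ))
    (hU : ∀ n, boxUpTo σ n ∈ U) : ∃ x ∈ univ.pi fun i => Iic (σ i), ↑U ≤ 𝓝 x := by
  have hcoord : ∀ i, ∃ v ≤ σ i, ↑(U.map (Function.eval i)) ≤ 𝓝 v := fun i =>
    (finite_Iic (σ i)).isCompact.ultrafilter_le_nhds _ <|
      le_principal_iff.2 <| Ultrafilter.mem_map.2 <|
        mem_of_superset (hU (i + 1)) fun x hx => hx i i.lt_succ_self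
  choose x hxσ hxU using hcoord
  exact ⟨x, fun i _ => hxσ i, tendsto_pi_nhds.2 hxU⟩

lemma iInter_closure_image_boxUpTo_subset {X : Type*} [TopologicalSpace X] [T2Space X]
    {τ : (ℕ → ℕ) → X} (hτ : Continuous τ) (σ : ℕ → ℕ) :
    ⋂ n, closure (τ '' boxUpTo σ n) ⊆ τ '' univ.pi fun i => Iic (σ i) := by
  intro y hy
  have hcluster : MapClusterPt y (⨅ n, 𝓟 (boxUpTo σ n)) τ := by
    refine mapClusterPt_iff_frequently.2 fun s hs => ?_
    refine ((hasBasis_iInf_principal (boxUpTo_antitone σ).directed_ge).frequently_iff).2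
      fun n _ => ?_
    obtain ⟨_, hys, x, hx, rfl⟩ := mem_closure_iff_nhds.1 (mem_iInter.1 hy n) s hs
    exact ⟨x, hx, hys⟩
  obtain ⟨U, hUle, hUy⟩ := mapClusterPt_iff_ultrafilter.1 hcluster
  obtain ⟨x, hxσ, hUx⟩ := exists_le_nhds_of_forall_boxUpTo_mem U fun n =>
    le_principal_iff.1 (hUle.trans (iInf_le _ n))
  exact ⟨x, hxσ, tendsto_nhds_unique ((hτ.tendsto x).comp hUx) hUy⟩

section Measure

variable {X : Type*} [MeasurableSpace X] (μ : Measure X) [IsFiniteMeasure μ]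

lemma exists_measure_image_le_image_inter_coord_le_add (τ : (ℕ → ℕ) → X) (E : Set (ℕ → ℕ))
    (n : ℕ) {δ : ℝ≥0∞} (hδ : δ ≠ 0) : ∃ k, μ (τ '' E) ≤ μ (τ '' (E ∩ {x | x n ≤ k})) + δ := by
  have hunion : ⋃ k, τ '' (E ∩ {x | x n ≤ k}) = τ '' E := by
    rw [← image_iUnion, ← inter_iUnion,
      iUnion_eq_univ_iff.2 fun x => ⟨x n, show x n ≤ x n from le_rfl⟩, inter_univ]
  have hmono : Monotone (fun k => τ '' (E ∩ {x | x n ≤ k})) :=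
    fun k l hkl => image_mono (inter_subset_inter_right E fun x hx => le_trans hx hkl)
  simpa only [hunion] using Monotone.exists_measure_iUnion_le_add hmono
    (hunion ▸ measure_ne_top μ _) hδ

lemma exists_forall_measure_range_le_image_boxUpTo_add (τ : (ℕ → ℕ) → X) {ε : ℝ≥0∞}
    (hε : ε ≠ 0) : ∃ σ : ℕ → ℕ, ∀ n, μ (range τ) ≤ μ (τ '' boxUpTo σ n) + ε := by
  obtain ⟨δ, hδpos, hδsum⟩ := ENNReal.exists_pos_sum_of_countable hε ℕ
  choose c hc using fun E n => exists_measure_image_le_image_inter_coord_le_add μ τ E n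
    (ENNReal.coe_ne_zero.2 (hδpos n).ne')
  let E : ℕ → Set (ℕ → ℕ) := fun n => Nat.rec univ (fun n E => E ∩ {x | x n ≤ c E n}) n
  set σ : ℕ → ℕ := fun n => c (E n) n
  have hE : ∀ n, E n = boxUpTo σ n := by
    intro n
    induction n with
    | zero => exact (boxUpTo_zero σ).symm
    | succ n ih => rw [boxUpTo_succ, ← ih]
  have hpartial :
      ∀ n, μ (range τ) ≤ μ (τ '' boxUpTo σ n) + ∑ i ∈ Finset.range n, (δ i : ℝ≥0∞) := by
    intro n
    induction n with
    | zero => simp [image_univ]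
    | succ n ih =>
      calc μ (range τ) ≤ μ (τ '' boxUpTo σ n) + ∑ i ∈ Finset.range n, (δ i : ℝ≥0∞) := ih
        _ ≤ μ (τ '' boxUpTo σ (n + 1)) + δ n + ∑ i ∈ Finset.range n, (δ i : ℝ≥0∞) := by
          gcongr
          rw [← hE, ← hE]
          exact hc (E n) n
        _ = μ (τ '' boxUpTo σ (n + 1)) + ∑ i ∈ Finset.range (n + 1), (δ i : ℝ≥0∞) := by
          rw [Finset.sum_range_succ]; ring
  refine ⟨σ, fun n => (hpartial n).trans ?_⟩
  gcongr
  exact (ENNReal.sum_le_tsum _).trans hδsum.le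

lemma exists_isCompact_subset_range_measure_le_add [TopologicalSpace X] [T2Space X]
    [OpensMeasurableSpace X] {τ : (ℕ → ℕ) → X} (hτ : Continuous τ) {ε : ℝ≥0∞} (hε : ε ≠ 0) :
    ∃ K ⊆ range τ, IsCompact K ∧ μ (range τ) ≤ μ K + ε := by
  obtain ⟨σ, hσ⟩ := exists_forall_measure_range_le_image_boxUpTo_add μ τ hε
  refine ⟨τ '' univ.pi fun i => Iic (σ i), image_subset_range _ _, ?_, ?_⟩
  · exact (isCompact_univ_pi fun i => (finite_Iic _).isCompact).image hτ
  have hanti : Antitone fun n => closure (τ '' boxUpTo σ n) :=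
    fun _ _ hnm => closure_mono (image_mono (boxUpTo_antitone σ hnm))
  calc μ (range τ) ≤ (⨅ n, μ (closure (τ '' boxUpTo σ n))) + ε := by
        rw [ENNReal.iInf_add]
        exact le_iInf fun n => (hσ n).trans (by gcongr; exact subset_closure)
    _ = μ (⋂ n, closure (τ '' boxUpTo σ n)) + ε := by
        rw [hanti.measure_iInter (fun _ => isClosed_closure.measurableSet.nullMeasurableSet)
          ⟨0, measure_ne_top μ _⟩]
    _ ≤ μ (τ '' univ.pi fun i => Iic (σ i)) + ε := by
        gcongr
        exact iInter_closure_image_boxUpTo_subset hτ σ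

end Measure

end Baire

theorem MeasureTheory.AnalyticSet.nullMeasurableSet {X : Type*} [TopologicalSpace X] [T2Space X]
    [MeasurableSpace X] [OpensMeasurableSpace X] {A : Set X} (hA : AnalyticSet A)
    (μ : Measure X) [IsFiniteMeasure μ] : NullMeasurableSet A μ := by
  rw [AnalyticSet] at hA
  rcases hA with rfl | ⟨τ, hτ, rfl⟩
  · exact nullMeasurableSet_empty
  choose K hKA hK hμK using fun n : ℕ => Baire.exists_isCompact_subset_range_measure_le_add μ hτ
    (ENNReal.inv_ne_zero.2 (ENNReal.natCast_ne_top n))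
  have hB : MeasurableSet (⋃ n, K n) := .iUnion fun n => (hK n).isClosed.measurableSet
  have hle : μ (range τ) ≤ μ (⋃ n, K n) := by
    refine ENNReal.le_of_forall_pos_le_add fun δ hδ _ => ?_
    obtain ⟨n, hn⟩ := ENNReal.exists_inv_nat_lt (ENNReal.coe_ne_zero.2 hδ.ne')
    calc μ (range τ) ≤ μ (K n) + (n : ℝ≥0∞)⁻¹ := hμK n
      _ ≤ μ (⋃ n, K n) + δ := add_le_add (measure_mono (subset_iUnion K n)) hn.le
  exact hB.nullMeasurableSet.congr <| ae_eq_of_subset_of_measure_ge (iUnion_subset hKA) hle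
    hB.nullMeasurableSet (measure_ne_top μ _)

/-- Every analytic subset of the Cantor space `M = {0,1}^ℕ` is universally measurable:
for every analytic `A ⊆ M` and every finite (Borel) measure `μ` on `M` there are Borel
sets `B⁻ ⊆ A ⊆ B⁺` with `μ(B⁺ \ B⁻) = 0`. -/
theorem stmt7 (A : Set (ℕ → Bool)) (hA : MeasureTheory.AnalyticSet A)
    (μ : Measure (ℕ → Bool)) (hμ : IsFiniteMeasure μ) :
    ∃ Bm Bp : Set (ℕ → Bool), MeasurableSet Bm ∧ MeasurableSet Bp ∧
      Bm ⊆ A ∧ A ⊆ Bp ∧ μ (Bp \ Bm) = 0 := by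
  have hAμ := hA.nullMeasurableSet μ
  obtain ⟨Bm, hBmA, hBm, hBmae⟩ := hAμ.exists_measurable_subset_ae_eq
  obtain ⟨Bp, hABp, hBp, hBpae⟩ := hAμ.exists_measurable_superset_ae_eq
  exact ⟨Bm, Bp, hBm, hBp, hBmA, hABp, (ae_eq_set.1 (hBpae.trans hBmae.symm)).1⟩
end

section
/- Let (X,E) and (Y,F) be measurable spaces, let f : (X,E) → (Y,F) be exactly measurable, and let ν be a measure on (Y,F). Then there exists a measure μ on (X,E) with ν = μ∘f⁻¹ (i.e., ν(F') = μ(f⁻¹(F')) for all F' ∈ F) if and only if f(X) is thick with respect to ν. Moreover, if such a measure μ exists then it is unique. -/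
open MeasureTheory

/-!
Every measurable subset of `X` is `f ⁻¹' F` for a measurable `F`, so pushing measures forward
along `f` is injective, and the only candidate for `μ` is `μ (f ⁻¹' F) = ν (F ∩ range f)`. This is
realised by the outer measure `s ↦ ν (f '' s)`, for which every measurable set is Carathéodory.
Its push-forward is `ν` exactly when `ν (F ∩ range f) = ν F` for measurable `F`, and thickness
gives this: the part of `F` outside a measurable hull of `F ∩ range f` misses `range f`.
-/

open Set

namespace MeasureTheory.Measure

variable {Y : Type*} [MeasurableSpace Y]

def IsThick (ν : Measure Y) (S : Set Y) : Prop :=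
  ∀ F : Set Y, MeasurableSet F → F ∩ S = ∅ → ν F = 0

theorem IsThick.measure_inter {ν : Measure Y} {S F : Set Y} (hS : ν.IsThick S)
    (hF : MeasurableSet F) : ν (F ∩ S) = ν F := by
  refine le_antisymm (measure_mono inter_subset_left) ?_
  set T := toMeasurable ν (F ∩ S)
  have hT : MeasurableSet T := measurableSet_toMeasurable ν _
  have hnull : ν (F \ T) = 0 := by
    refine hS _ (hF.diff hT) (eq_empty_of_forall_notMem ?_)
    rintro y ⟨⟨hyF, hyT⟩, hyS⟩
    exact hyT (subset_toMeasurable ν _ ⟨hyF, hyS⟩)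
  calc ν F = ν (F ∩ T) + ν (F \ T) := (measure_inter_add_sdiff F hT).symm
    _ ≤ ν T := by rw [hnull, add_zero]; exact measure_mono inter_subset_right
    _ = ν (F ∩ S) := measure_toMeasurable _

theorem map_eq_iff {X : Type*} [MeasurableSpace X] {f : X → Y} (hf : Measurable f)
    {μ : Measure X} {ν : Measure Y} :
    μ.map f = ν ↔ ∀ F : Set Y, MeasurableSet F → ν F = μ (f ⁻¹' F) :=
  ⟨by rintro rfl F hF; exact map_apply hf hF,
    fun h => ext fun F hF => by rw [map_apply hf hF, h F hF]⟩

theorem isThick_range_map {X : Type*} [MeasurableSpace X] {f : X → Y} (hf : Measurable f)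
    (μ : Measure X) : (μ.map f).IsThick (range f) := fun F hF hdisj => by
  rw [map_apply hf hF, preimage_eq_empty_iff.2 (disjoint_iff_inter_eq_empty.2 hdisj),
    measure_empty]

end MeasureTheory.Measure

namespace ExactlyMeasurable

variable {X Y : Type*} [MeasurableSpace X] [MeasurableSpace Y] {f : X → Y}

theorem measurable (hf : ExactlyMeasurable f) : Measurable f :=
  measurable_iff_comap_le.2 hf.le

theorem exists_preimage_eq (hf : ExactlyMeasurable f) {S : Set X} (hS : MeasurableSet S) :
    ∃ F : Set Y, MeasurableSet F ∧ f ⁻¹' F = S := by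
  rw [← hf] at hS
  exact hS

theorem map_injective (hf : ExactlyMeasurable f) : Function.Injective (Measure.map f) := by
  intro μ₁ μ₂ h
  ext S hS
  obtain ⟨F, hF, rfl⟩ := hf.exists_preimage_eq hS
  rw [← Measure.map_apply hf.measurable hF, h, Measure.map_apply hf.measurable hF]

theorem le_caratheodory_comap (hf : ExactlyMeasurable f) (ν : Measure Y) :
    ‹MeasurableSpace X› ≤ (OuterMeasure.comap f ν.toOuterMeasure).caratheodory := by
  intro S hS t
  obtain ⟨F, hF, rfl⟩ := hf.exists_preimage_eq hS
  simp only [OuterMeasure.comap_apply, image_inter_preimage, image_sdiff_preimage,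
    Measure.coe_toOuterMeasure]
  exact (measure_inter_add_sdiff _ hF).symm

noncomputable def pullback (hf : ExactlyMeasurable f) (ν : Measure Y) : Measure X :=
  (OuterMeasure.comap f ν.toOuterMeasure).toMeasure (hf.le_caratheodory_comap ν)

theorem pullback_apply_preimage (hf : ExactlyMeasurable f) (ν : Measure Y) {F : Set Y}
    (hF : MeasurableSet F) : hf.pullback ν (f ⁻¹' F) = ν (F ∩ range f) := by
  rw [pullback, toMeasure_apply _ _ (hf.measurable hF), OuterMeasure.comap_apply,
    image_preimage_eq_inter_range, Measure.coe_toOuterMeasure]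

theorem map_pullback (hf : ExactlyMeasurable f) {ν : Measure Y}
    (hν : ν.IsThick (range f)) : (hf.pullback ν).map f = ν :=
  (Measure.map_eq_iff hf.measurable).2 fun _ hF =>
    (hf.pullback_apply_preimage ν hF ▸ hν.measure_inter hF).symm

end ExactlyMeasurable

/-- Let `f : (X,E) → (Y,F)` be exactly measurable and `ν` a measure on `(Y,F)`.
Then there exists a measure `μ` on `(X,E)` with `ν = μ ∘ f⁻¹` (i.e. `ν(F') = μ(f⁻¹(F'))`
for all `F' ∈ F`) if and only if `f(X)` is thick with respect to `ν` (i.e. `ν(F') = 0`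
whenever `F' ∈ F` is disjoint from `f(X)`).  Moreover such a `μ`, if it exists,
is unique. -/
theorem stmt9 {X Y : Type*} [MeasurableSpace X] [MeasurableSpace Y]
    (f : X → Y) (hf : ExactlyMeasurable f) (ν : Measure Y) :
    ((∃ μ : Measure X, ∀ F' : Set Y, MeasurableSet F' → ν F' = μ (f ⁻¹' F')) ↔
      (∀ F' : Set Y, MeasurableSet F' → F' ∩ Set.range f = ∅ → ν F' = 0)) ∧
    (∀ μ₁ μ₂ : Measure X,
      (∀ F' : Set Y, MeasurableSet F' → ν F' = μ₁ (f ⁻¹' F')) →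
      (∀ F' : Set Y, MeasurableSet F' → ν F' = μ₂ (f ⁻¹' F')) → μ₁ = μ₂) := by
  simp_rw [← Measure.map_eq_iff hf.measurable]
  refine ⟨⟨?_, fun hν => ⟨hf.pullback ν, hf.map_pullback hν⟩⟩,
    fun μ₁ μ₂ h₁ h₂ => hf.map_injective (h₁.trans h₂.symm)⟩
  rintro ⟨μ, rfl⟩
  exact Measure.isThick_range_map hf.measurable μ
end

section
/- (Dunford–Pettis, sufficiency) Let (X,E) be a measurable space and let Q be an equicontinuous set of probability measures on (X,E). Then for every sequence {μ_n}_{n≥1} from Q there exist a subsequence {n_j}_{j≥1} and a probability measure μ on (X,E) such that μ(E') = lim_{j→∞} μ_{n_j}(E') for every E' ∈ E. -/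
/-!
All `μ n` have densities `f n` with respect to one finite measure `ρ`, and the `f n` generate a
countably generated σ-algebra `m`. A diagonal argument gives a subsequence converging on a
countable algebra generating `m`. Equicontinuity makes limits of measures countably additive
(the tails of a disjoint union are uniformly small), so Dynkin's π-λ theorem extends the
convergence to every `m`-measurable set. For an arbitrary measurable `E`, the conditional
expectation `h = ρ[𝟙_E | m]` is `m`-measurable with `0 ≤ h ≤ 1` and `μ n E = ∫ h dμ n`, because
the density of `μ n` is `m`-measurable; by the layer-cake formula and dominated convergence these
integrals converge as well. The setwise limit is countably additive, hence a probability measure.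
-/

open MeasureTheory Filter Set Topology
open scoped ENNReal Function

namespace MeasureTheory

section AmbientSpace

variable {X : Type*} [mX : MeasurableSpace X]

def MeasuresEquicontinuous (Q : Set (Measure X)) : Prop :=
  ∀ E : ℕ → Set X, (∀ n, MeasurableSet (E n)) → Antitone E →
    (⋂ n, E n) = ∅ → ∀ ε : ℝ≥0∞, 0 < ε → ∃ p : ℕ, ∀ μ ∈ Q, μ (E p) < ε

lemma MeasuresEquicontinuous.tendsto_measure_iUnion {Q : Set (Measure X)}
    (hQ : MeasuresEquicontinuous Q) {ν : ℕ → Measure X} (hν : ∀ j, ν j ∈ Q)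
    {A : ℕ → Set X} (hA : ∀ k, MeasurableSet (A k)) (hdisj : Pairwise (Disjoint on A))
    {l : ℕ → ℝ≥0∞} (hl : ∀ k, Tendsto (fun j => ν j (A k)) atTop (𝓝 (l k))) :
    Tendsto (fun j => ν j (⋃ k, A k)) atTop (𝓝 (∑' k, l k)) := by
  set B : ℕ → Set X := fun p => ⋃ k ∈ Finset.range p, A k
  have hB : ∀ p, MeasurableSet (B p) := fun p => Finset.measurableSet_biUnion _ fun k _ => hA k
  have hνB : ∀ j p, ν j (B p) = ∑ k ∈ Finset.range p, ν j (A k) := fun j p =>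
    measure_biUnion_finset (fun i _ k _ hik => hdisj hik) fun k _ => hA k
  have hlimB : ∀ p, Tendsto (fun j => ν j (B p)) atTop (𝓝 (∑ k ∈ Finset.range p, l k)) :=
    fun p => by simpa only [hνB] using tendsto_finsetSum _ fun k _ => hl k
  refine tendsto_of_le_liminf_of_limsup_le ?_ ?_
  · rw [ENNReal.tsum_eq_iSup_nat]
    refine iSup_le fun p => ?_
    rw [← (hlimB p).liminf_eq]
    exact liminf_le_liminf (Eventually.of_forall fun j =>
      measure_mono (iUnion₂_subset fun k _ => subset_iUnion A k))
  · refine ENNReal.le_of_forall_pos_le_add fun ε hε _ => ?_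
    have htail_anti : Antitone fun p => (⋃ k, A k) \ B p := fun p q hpq =>
      sdiff_subset_sdiff_right (biUnion_subset_biUnion_left (by simpa using hpq))
    have htail_empty : (⋂ p, (⋃ k, A k) \ B p) = ∅ := by
      refine eq_empty_of_forall_notMem fun x hx => ?_
      obtain ⟨k, hk⟩ := mem_iUnion.1 (mem_iInter.1 hx 0).1
      exact (mem_iInter.1 hx (k + 1)).2 (mem_biUnion (Finset.self_mem_range_succ k) hk)
    obtain ⟨p, hp⟩ := hQ _ (fun p => (MeasurableSet.iUnion hA).diff (hB p)) htail_anti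
      htail_empty ε (by exact_mod_cast hε)
    have hsplit : ∀ j, ν j (⋃ k, A k) ≤ ν j (B p) + ε := fun j =>
      (measure_le_inter_add_sdiff _ _ _).trans <|
        add_le_add (measure_mono inter_subset_right) (hp _ (hν j)).le
    calc limsup (fun j => ν j (⋃ k, A k)) atTop
        ≤ limsup (fun j => ν j (B p) + ε) atTop := limsup_le_limsup (Eventually.of_forall hsplit)
      _ = ∑ k ∈ Finset.range p, l k + ε := ((hlimB p).add_const _).limsup_eq
      _ ≤ ∑' k, l k + ε := by gcongr; exact ENNReal.sum_le_tsum _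

lemma MeasuresEquicontinuous.exists_isProbabilityMeasure_tendsto {Q : Set (Measure X)}
    (hQ : MeasuresEquicontinuous Q) {ν : ℕ → Measure X} (hν : ∀ j, ν j ∈ Q)
    [∀ j, IsProbabilityMeasure (ν j)]
    (hconv : ∀ s, MeasurableSet s → ∃ l, Tendsto (fun j => ν j s) atTop (𝓝 l)) :
    ∃ μ : Measure X, IsProbabilityMeasure μ ∧
      ∀ s, MeasurableSet s → Tendsto (fun j => ν j s) atTop (𝓝 (μ s)) := by
  choose L hL using hconv
  let μ : Measure X := Measure.ofMeasurable L
    (tendsto_nhds_unique (hL ∅ .empty) (by simp))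
    (fun A hA hdisj => tendsto_nhds_unique (hL _ (.iUnion hA))
      (hQ.tendsto_measure_iUnion hν hA hdisj fun k => hL _ (hA k)))
  have hμ : ∀ s hs, μ s = L s hs := Measure.ofMeasurable_apply
  refine ⟨μ, ⟨?_⟩, fun s hs => hμ s hs ▸ hL s hs⟩
  rw [hμ _ .univ]
  exact tendsto_nhds_unique (hL _ _) (by simp)

lemma MeasuresEquicontinuous.exists_tendsto_of_isPiSystem {Q : Set (Measure X)}
    (hQ : MeasuresEquicontinuous Q) {ν : ℕ → Measure X} (hν : ∀ j, ν j ∈ Q)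
    [∀ j, IsProbabilityMeasure (ν j)] {C : Set (Set X)}
    (hgen : ‹MeasurableSpace X› = MeasurableSpace.generateFrom C) (hpi : IsPiSystem C)
    (hC : ∀ s ∈ C, ∃ l, Tendsto (fun j => ν j s) atTop (𝓝 l)) {s : Set X}
    (hs : MeasurableSet s) : ∃ l, Tendsto (fun j => ν j s) atTop (𝓝 l) := by
  induction s, hs using MeasurableSpace.induction_on_inter hgen hpi with
  | empty => exact ⟨0, by simp⟩
  | basic t ht => exact hC t ht
  | compl t ht ih =>
    obtain ⟨l, hl⟩ := ih
    refine ⟨1 - l, ?_⟩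
    simp_rw [prob_compl_eq_one_sub ht]
    exact ENNReal.Tendsto.sub tendsto_const_nhds hl (.inl ENNReal.one_ne_top)
  | iUnion A hdisj hA ih =>
    choose l hl using ih
    exact ⟨_, hQ.tendsto_measure_iUnion hν hA hdisj hl⟩

lemma MeasuresEquicontinuous.exists_subseq_tendsto_of_countablyGenerated
    [MeasurableSpace.CountablyGenerated X]
    {Q : Set (Measure X)} (hQ : MeasuresEquicontinuous Q) {μ : ℕ → Measure X}
    (hμ : ∀ n, μ n ∈ Q) [∀ n, IsProbabilityMeasure (μ n)] :
    ∃ φ : ℕ → ℕ, StrictMono φ ∧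
      ∀ s, MeasurableSet s → ∃ l, Tendsto (fun j => μ (φ j) s) atTop (𝓝 l) := by
  set C := generateSetAlgebra (MeasurableSpace.countableGeneratingSet X)
  have := (countable_generateSetAlgebra MeasurableSpace.countable_countableGeneratingSet
    (α := X)).to_subtype
  obtain ⟨L, φ, hφ, hL⟩ := SeqCompactSpace.tendsto_subseq fun n (s : C) => μ n s
  refine ⟨φ, hφ, fun s hs => hQ.exists_tendsto_of_isPiSystem (fun j => hμ (φ j)) ?_
    (fun s hs t ht _ => isSetAlgebra_generateSetAlgebra.inter_mem hs ht)
    (fun t ht => ⟨L ⟨t, ht⟩, tendsto_pi_nhds.1 hL ⟨t, ht⟩⟩) hs⟩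
  rw [generateFrom_generateSetAlgebra_eq, MeasurableSpace.generateFrom_countableGeneratingSet]

lemma exists_tendsto_lintegral_of_tendsto_measure {ν : ℕ → Measure X}
    [∀ j, IsProbabilityMeasure (ν j)]
    (hconv : ∀ s, MeasurableSet s → ∃ l, Tendsto (fun j => ν j s) atTop (𝓝 l))
    {h : X → ℝ} (hh : Measurable h) (h0 : 0 ≤ h) {C : ℝ} (hC : ∀ x, h x ≤ C) :
    ∃ l, Tendsto (fun j => ∫⁻ x, ENNReal.ofReal (h x) ∂ν j) atTop (𝓝 l) := by
  choose L hL using hconv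
  have hlevel : ∀ t : ℝ, MeasurableSet {x | t < h x} := fun t =>
    measurableSet_lt measurable_const hh
  refine ⟨∫⁻ t in Ioi 0, L _ (hlevel t), ?_⟩
  simp_rw [lintegral_eq_lintegral_meas_lt _ (Eventually.of_forall h0) hh.aemeasurable]
  refine tendsto_lintegral_of_dominated_convergence ((Iio C).indicator 1)
    (fun j => Antitone.measurable fun s t hst => measure_mono fun x hx => hst.trans_lt hx)
    (fun j => Eventually.of_forall fun t => ?_) ?_ (Eventually.of_forall fun t => hL _ (hlevel t))
  · by_cases ht : t < C
    · simpa [indicator_of_mem (show t ∈ Iio C from ht)] using prob_le_one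
    · have : {x | t < h x} = ∅ := eq_empty_of_forall_notMem fun x hx =>
        ht ((show t < h x from hx).trans_le (hC x))
      simp [this]
  · rw [lintegral_indicator_one measurableSet_Iio, Measure.restrict_apply measurableSet_Iio,
      Iio_inter_Ioi, Real.volume_Ioo]
    exact ENNReal.ofReal_ne_top

lemma exists_isFiniteMeasure_eq_withDensity (μ : ℕ → Measure X) [∀ n, SigmaFinite (μ n)] :
    ∃ ρ : Measure X, IsFiniteMeasure ρ ∧ ∃ f : ℕ → X → ℝ≥0∞,
      (∀ n, Measurable (f n)) ∧ ∀ n, μ n = ρ.withDensity (f n) := by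
  obtain ⟨ρ, hρ, hac, -⟩ := exists_isFiniteMeasure_absolutelyContinuous (Measure.sum μ)
  exact ⟨ρ, hρ, fun n => (μ n).rnDeriv ρ, fun n => Measure.measurable_rnDeriv _ _, fun n =>
    (Measure.withDensity_rnDeriv_eq _ _ ((Measure.le_sum μ n).absolutelyContinuous.trans hac)).symm⟩

lemma exists_countablyGenerated_le_forall_measurable {f : ℕ → X → ℝ≥0∞}
    (hf : ∀ n, Measurable (f n)) :
    ∃ m : MeasurableSpace X, m ≤ mX ∧ @MeasurableSpace.CountablyGenerated X m ∧
      ∀ n, Measurable[m] (f n) :=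
  ⟨.comap (fun x n => f n x) inferInstance, (measurable_pi_lambda _ hf).comap_le, .comap _,
    fun n => (measurable_pi_apply n).comp (comap_measurable fun x n => f n x)⟩

end AmbientSpace

section SubSigmaAlgebra

variable {X : Type*} {m m0 : MeasurableSpace X}

lemma isProbabilityMeasure_trim (hm : m ≤ m0) (μ : Measure[m0] X) [IsProbabilityMeasure μ] :
    IsProbabilityMeasure (μ.trim hm) :=
  ⟨by rw [trim_measurableSet_eq hm .univ, measure_univ]⟩

lemma MeasuresEquicontinuous.trim (hm : m ≤ m0) {Q : Set (Measure[m0] X)}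
    (hQ : MeasuresEquicontinuous Q) :
    @MeasuresEquicontinuous X m ((fun μ => μ.trim hm) '' Q) := by
  intro E hE hanti hempty ε hε
  obtain ⟨p, hp⟩ := hQ E (fun n => hm _ (hE n)) hanti hempty ε hε
  refine ⟨p, ?_⟩
  rintro _ ⟨μ, hμ, rfl⟩
  rw [trim_measurableSet_eq hm (hE p)]
  exact hp μ hμ

lemma exists_withDensity_apply_eq_lintegral_trim (hm : m ≤ m0) (ρ : Measure[m0] X)
    [IsFiniteMeasure ρ] {E : Set X} (hE : MeasurableSet[m0] E) :
    ∃ h : X → ℝ, Measurable[m] h ∧ 0 ≤ h ∧ (∀ x, h x ≤ 1) ∧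
      ∀ f : X → ℝ≥0∞, Measurable[m] f →
        ρ.withDensity f E = ∫⁻ x, ENNReal.ofReal (h x) ∂(ρ.withDensity f).trim hm := by
  set κ := (ρ.restrict E).trim hm
  have hκ : κ ≤ ρ.trim hm := Measure.le_iff.2 fun s hs => by
    simp only [κ, trim_measurableSet_eq hm hs]
    exact Measure.restrict_apply_le _ _
  set r := κ.rnDeriv (ρ.trim hm)
  have hr : Measurable[m] r := Measure.measurable_rnDeriv _ _
  refine ⟨fun x => (min (r x) 1).toReal, (hr.min measurable_const).ennreal_toReal,
    fun x => ENNReal.toReal_nonneg, fun x => ENNReal.toReal_le_of_le_ofReal zero_le_one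
      (by simp), fun f hf => ?_⟩
  have hmin : (fun x => ENNReal.ofReal (min (r x) 1).toReal) =ᵐ[ρ.trim hm] r := by
    filter_upwards [Measure.rnDeriv_le_one_of_le hκ] with x hx
    rw [ENNReal.ofReal_toReal (min_lt_of_right_lt ENNReal.one_lt_top).ne]
    exact min_eq_left hx
  calc ρ.withDensity f E = ∫⁻ x, f x ∂κ := by
        rw [withDensity_apply _ hE, lintegral_trim hm hf]
    _ = ∫⁻ x, r x * f x ∂ρ.trim hm := by
        rw [← Measure.withDensity_rnDeriv_eq κ _ hκ.absolutelyContinuous,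
          lintegral_withDensity_eq_lintegral_mul _ hr hf]
        rfl
    _ = ∫⁻ x, ENNReal.ofReal (min (r x) 1).toReal * f x ∂ρ.trim hm :=
        lintegral_congr_ae (hmin.symm.mul (ae_eq_refl f))
    _ = ∫⁻ x, ENNReal.ofReal (min (r x) 1).toReal ∂(ρ.withDensity f).trim hm := by
        rw [trim_withDensity hm hf, lintegral_withDensity_eq_lintegral_mul _ hf
          (hr.min measurable_const).ennreal_toReal.ennreal_ofReal]
        simp only [Pi.mul_apply, mul_comm]

end SubSigmaAlgebra

lemma MeasuresEquicontinuous.exists_subseq_tendsto {X : Type*} [MeasurableSpace X]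
    {Q : Set (Measure X)} (hQ : MeasuresEquicontinuous Q) {μ : ℕ → Measure X}
    (hμ : ∀ n, μ n ∈ Q) [∀ n, IsProbabilityMeasure (μ n)] :
    ∃ φ : ℕ → ℕ, StrictMono φ ∧
      ∀ s, MeasurableSet s → ∃ l, Tendsto (fun j => μ (φ j) s) atTop (𝓝 l) := by
  obtain ⟨ρ, _, f, hf, hμf⟩ := exists_isFiniteMeasure_eq_withDensity μ
  obtain ⟨m, hm, hmc, hfm⟩ := exists_countablyGenerated_le_forall_measurable hf
  obtain ⟨φ, hφ, hconv⟩ :=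
    @MeasuresEquicontinuous.exists_subseq_tendsto_of_countablyGenerated X m hmc _ (hQ.trim hm)
      (fun n => (μ n).trim hm) (fun n => mem_image_of_mem _ (hμ n))
      fun n => isProbabilityMeasure_trim hm (μ n)
  refine ⟨φ, hφ, fun E hE => ?_⟩
  obtain ⟨h, hhm, h0, h1, hh⟩ := exists_withDensity_apply_eq_lintegral_trim hm ρ hE
  have hE_eq : ∀ n, μ n E = ∫⁻ x, ENNReal.ofReal (h x) ∂(μ n).trim hm := fun n => by
    rw [hμf n]
    exact hh _ (hfm n)
  simpa only [hE_eq] using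
    @exists_tendsto_lintegral_of_tendsto_measure X m _
      (fun j => isProbabilityMeasure_trim hm _) hconv h hhm h0 1 h1

end MeasureTheory

/-- (Dunford–Pettis, sufficiency) Let `Q` be an equicontinuous set of probability measures
on a measurable space `(X,E)`: for every decreasing sequence of measurable sets with empty
intersection and every `ε > 0`, some tail set has measure `< ε` uniformly over `Q`.
Then every sequence from `Q` has a subsequence converging setwise to some probability
measure `μ` on `(X,E)`. -/
theorem stmt11 {X : Type*} [MeasurableSpace X]
    (Q : Set (Measure X)) (hprob : ∀ μ ∈ Q, IsProbabilityMeasure μ)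
    (hequi : ∀ E : ℕ → Set X, (∀ n, MeasurableSet (E n)) → Antitone E →
      (⋂ n, E n) = ∅ → ∀ ε : ENNReal, 0 < ε → ∃ p : ℕ, ∀ μ ∈ Q, μ (E p) < ε)
    (μseq : ℕ → Measure X) (hμseq : ∀ n, μseq n ∈ Q) :
    ∃ φ : ℕ → ℕ, StrictMono φ ∧
      ∃ μ : Measure X, IsProbabilityMeasure μ ∧
        ∀ E' : Set X, MeasurableSet E' →
          Tendsto (fun j => μseq (φ j) E') atTop (nhds (μ E')) := by
  have hQ : MeasuresEquicontinuous Q := hequi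
  have := fun n => hprob _ (hμseq n)
  obtain ⟨φ, hφ, hconv⟩ := hQ.exists_subseq_tendsto hμseq
  obtain ⟨μ, hμ, hlim⟩ := hQ.exists_isProbabilityMeasure_tendsto (fun j => hμseq (φ j)) hconv
  exact ⟨φ, hφ, μ, hμ, hlim⟩
end

section
/- Let A be a nonempty analytic subset of M and let f : (A, B|_A) → (M,B) be an injective measurable map, where B|_A is the trace σ-algebra {B' ∩ A : B' ∈ B}. Then f is exactly measurable; equivalently, for every Borel set B' ∈ B the image f(B' ∩ A) belongs to the trace σ-algebra B|_{f(A)}. -/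
open MeasureTheory

/-- Let `A` be a nonempty analytic subset of the Cantor space `M = {0,1}^ℕ`, endowed with
the trace σ-algebra (the subtype σ-algebra, i.e. `{B' ∩ A : B' ∈ B}`), and let
`f : A → M` be an injective measurable map.  Then `f` is exactly measurable: the
σ-algebra `f⁻¹(B)` coincides with the trace σ-algebra on `A`. -/
theorem stmt15 (A : Set (ℕ → Bool)) (hne : A.Nonempty)
    (hA : MeasureTheory.AnalyticSet A)
    (f : A → (ℕ → Bool)) (hf : Measurable f) (hinj : Function.Injective f) :
    MeasurableSpace.comap f inferInstance = (inferInstance : MeasurableSpace A) := by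
  refine le_antisymm hf.comap_le ?_
  -- obtain a Polish parametrization of A
  rcases analyticSet_iff_exists_polishSpace_range.1 hA with ⟨Z, tZ, pZ, g, hg, hrange⟩
  intro S hS
  -- corestriction of g to A
  have hmem : ∀ z, g z ∈ A := fun z => hrange ▸ Set.mem_range_self z
  set g' : Z → A := fun z => ⟨g z, hmem z⟩ with hg'
  have hg'cont : Continuous g' := Continuous.subtype_mk hg hmem
  have hg'surj : Function.Surjective g' := by
    intro a
    rcases (hrange ▸ a.2 : (a : ℕ → Bool) ∈ Set.range g) with ⟨z, hz⟩
    exact ⟨z, Subtype.ext hz⟩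
  letI : MeasurableSpace Z := borel Z
  haveI : BorelSpace Z := ⟨rfl⟩
  have hg'meas : Measurable g' := hg'cont.measurable
  set h : Z → (ℕ → Bool) := f ∘ g' with hh
  have hhmeas : Measurable h := hf.comp hg'meas
  -- the two images
  have h1 : AnalyticSet (h '' (g' ⁻¹' S)) :=
    (hg'meas hS).analyticSet_image hhmeas
  have h2 : AnalyticSet (h '' (g' ⁻¹' Sᶜ)) :=
    (hg'meas hS.compl).analyticSet_image hhmeas
  have him1 : h '' (g' ⁻¹' S) = f '' S := by
    rw [hh, Set.image_comp]
    rw [Set.image_preimage_eq _ hg'surj]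
  have him2 : h '' (g' ⁻¹' Sᶜ) = f '' Sᶜ := by
    rw [hh, Set.image_comp]
    rw [Set.image_preimage_eq _ hg'surj]
  rw [him1] at h1; rw [him2] at h2
  have hdisj : Disjoint (f '' S) (f '' Sᶜ) :=
    (Set.disjoint_image_iff hinj).2 disjoint_compl_right
  rcases h1.measurablySeparable h2 hdisj with ⟨C, hSC, hC2, hCmeas⟩
  have : f ⁻¹' C = S := by
    apply Set.Subset.antisymm
    · intro a ha
      by_contra hnot
      exact Set.disjoint_left.1 hC2 (Set.mem_image_of_mem f hnot) ha
    · intro a ha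
      exact hSC (Set.mem_image_of_mem f ha)
  exact ⟨C, hCmeas, this⟩
end
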